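/- Let (G, u) be a unital abelian ℓ-group and J an ℓ-ideal of G (possibly equal to G). Then J is a maximal ℓ-ideal if and only if u ∉ J and for every a ∈ G with a ∉ J there exists n ∈ ℕ such that (u − n • |a|) ⊔ 0 ∈ J. -/

import Mathlib

/-!
If `J` is maximal and `a ∉ J`, the ℓ-ideal generated by `J` and `a` is everything, so the unit
satisfies `|u| ≤ n • |a| + j` with `j ∈ J`; then `(u - n • |a|) ⊔ 0 ≤ |j|` lies in `J`.
Conversely, if `J ⊊ K` with `a ∈ K \ J`, then `u ≤ (u - n • |a|) ⊔ 0 + n • |a| ∈ K`, and an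
ℓ-ideal containing an element above a unit is the whole group.
-/

/-- An ℓ-ideal of an abelian ℓ-group is an additive subgroup that is
order-convex with respect to absolute values. -/
def IsLIdeal {G : Type*} [Lattice G] [AddCommGroup G] (J : AddSubgroup G) : Prop :=
  ∀ a b : G, |a| ≤ |b| → b ∈ J → a ∈ J

/-- A maximal ℓ-ideal is a proper ℓ-ideal not strictly contained in any
proper ℓ-ideal. -/
def IsMaximalLIdeal {G : Type*} [Lattice G] [AddCommGroup G] (J : AddSubgroup G) : Prop :=
  IsLIdeal J ∧ J ≠ ⊤ ∧ ∀ K : AddSubgroup G, IsLIdeal K → K ≠ ⊤ → J ≤ K → J = K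

section LIdeal

variable {G : Type*} [Lattice G] [AddCommGroup G] [AddLeftMono G]

/-- The ℓ-ideal generated by `J` and `a`, when `J` is an ℓ-ideal. -/
def lIdealAdjoin (J : AddSubgroup G) (a : G) : AddSubgroup G where
  carrier := {g | ∃ n : ℕ, ∃ j ∈ J, |g| ≤ n • |a| + j}
  zero_mem' := ⟨0, 0, J.zero_mem, by simp⟩
  add_mem' := by
    rintro x y ⟨n, j, hj, hx⟩ ⟨m, k, hk, hy⟩
    refine ⟨n + m, j + k, J.add_mem hj hk, ?_⟩
    calc |x + y| ≤ |x| + |y| := abs_add_le x y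
      _ ≤ (n • |a| + j) + (m • |a| + k) := add_le_add hx hy
      _ = (n + m) • |a| + (j + k) := by rw [add_nsmul]; abel
  neg_mem' := by
    rintro x ⟨n, j, hj, hx⟩
    exact ⟨n, j, hj, by rwa [abs_neg]⟩

theorem isLIdeal_lIdealAdjoin (J : AddSubgroup G) (a : G) : IsLIdeal (lIdealAdjoin J a) := by
  rintro x y hxy ⟨n, j, hj, hy⟩
  exact ⟨n, j, hj, hxy.trans hy⟩

theorem self_mem_lIdealAdjoin (J : AddSubgroup G) (a : G) : a ∈ lIdealAdjoin J a :=
  ⟨1, 0, J.zero_mem, by simp⟩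

namespace IsLIdeal

variable {J : AddSubgroup G}

theorem abs_mem (hJ : IsLIdeal J) {a : G} (ha : a ∈ J) : |a| ∈ J :=
  hJ |a| a (abs_abs a).le ha

theorem le_lIdealAdjoin (hJ : IsLIdeal J) (a : G) : J ≤ lIdealAdjoin J a :=
  fun g hg => ⟨0, |g|, hJ.abs_mem hg, by simp⟩

theorem sup_zero_mem_of_le (hJ : IsLIdeal J) {x j : G} (hj : j ∈ J) (hxj : x ≤ j) :
    x ⊔ 0 ∈ J :=
  hJ _ j (by
    rw [abs_of_nonneg le_sup_right]
    exact sup_le (hxj.trans (le_abs_self j)) (abs_nonneg j)) hj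

theorem eq_top_of_unit_le_mem (hJ : IsLIdeal J) {u y : G} (hu : ∀ g : G, ∃ n : ℕ, |g| ≤ n • u)
    (hy : y ∈ J) (huy : u ≤ y) : J = ⊤ := by
  refine (AddSubgroup.eq_top_iff' J).2 fun g => ?_
  obtain ⟨n, hn⟩ := hu g
  exact hJ g (n • y) ((hn.trans (nsmul_le_nsmul_right huy n)).trans (le_abs_self _))
    (J.nsmul_mem hy n)

end IsLIdeal

end LIdeal

theorem stmt11_general {G : Type*}
    [Lattice G] [AddCommGroup G] [CovariantClass G G (· + ·) (· ≤ ·)]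
    (u : G) (hu : ∀ g : G, ∃ n : ℕ, |g| ≤ n • u)
    (J : AddSubgroup G) (hJ : IsLIdeal J) :
    IsMaximalLIdeal J ↔
      u ∉ J ∧ ∀ a : G, a ∉ J → ∃ n : ℕ, (u - n • |a|) ⊔ 0 ∈ J := by
  constructor
  · rintro ⟨-, hJtop, hmax⟩
    refine ⟨fun huJ => hJtop (hJ.eq_top_of_unit_le_mem hu huJ le_rfl), fun a ha => ?_⟩
    have htop : lIdealAdjoin J a = ⊤ := by
      by_contra hne
      have hJeq := hmax _ (isLIdeal_lIdealAdjoin J a) hne (hJ.le_lIdealAdjoin a)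
      exact ha (hJeq ▸ self_mem_lIdealAdjoin J a)
    obtain ⟨n, j, hj, hun⟩ : u ∈ lIdealAdjoin J a := htop ▸ AddSubgroup.mem_top u
    exact ⟨n, hJ.sup_zero_mem_of_le hj (sub_le_iff_le_add'.2 ((le_abs_self u).trans hun))⟩
  · rintro ⟨huJ, hcond⟩
    refine ⟨hJ, fun htop => huJ (htop ▸ AddSubgroup.mem_top u), fun K hK hKtop hJK => ?_⟩
    by_contra hne
    obtain ⟨a, haK, haJ⟩ := SetLike.exists_of_lt (lt_of_le_of_ne hJK hne)
    obtain ⟨n, hn⟩ := hcond a haJ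
    have hmem : (u - n • |a|) ⊔ 0 + n • |a| ∈ K :=
      K.add_mem (hJK hn) (K.nsmul_mem (hK.abs_mem haK) n)
    exact hKtop (hK.eq_top_of_unit_le_mem hu hmem (sub_le_iff_le_add.1 le_sup_left))

/-- Characterization of maximal ℓ-ideals in a unital abelian ℓ-group. -/
theorem stmt11 {G : Type*}
    [Lattice G] [AddCommGroup G] [CovariantClass G G (· + ·) (· ≤ ·)]
    (u : G) (hu0 : 0 ≤ u) (hu : ∀ g : G, ∃ n : ℕ, |g| ≤ n • u)
    (J : AddSubgroup G) (hJ : IsLIdeal J) :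
    IsMaximalLIdeal J ↔
      u ∉ J ∧ ∀ a : G, a ∉ J → ∃ n : ℕ, (u - n • |a|) ⊔ 0 ∈ J :=
  stmt11_general u hu J hJ
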